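/- The Hankel determinant of the generalized q-exponential polynomials φ_n(x,r) = ∑_{k=0}^n S(n,k,r) x^k satisfies det(φ_{i+j}(x,r))_{i,j=0}^{n-1} = q^{C(n,3)} (q^r x)^{C(n,2)} ∏_{k=0}^{n-1} [k]!. -/
import Mathlib


noncomputable section

open Finset Polynomial

/-- q-analogue [m] = (1-q^m)/(1-q) = 1 + q + ... + q^(m-1). -/
def qb (q : ℚ) (m : ℕ) : ℚ := ∑ i ∈ Finset.range m, q ^ i

/-- q-factorial [n]! -/
def qfact (q : ℚ) (n : ℕ) : ℚ := ∏ i ∈ Finset.range n, qb q (i + 1)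

/-- Gaussian binomial coefficient [n choose k]_q via the q-Pascal recurrence. -/
def qbinom (q : ℚ) : ℕ → ℕ → ℚ
  | _, 0 => 1
  | 0, _ + 1 => 0
  | n + 1, k + 1 => qbinom q n k + q ^ (k + 1) * qbinom q n (k + 1)

/-- Generalized q-Stirling numbers S(n,k,r). -/
def qS (q : ℚ) (r : ℕ) : ℕ → ℕ → ℚ
  | 0, 0 => 1
  | 0, _ + 1 => 0
  | n + 1, 0 => qb q r * qS q r n 0
  | n + 1, k + 1 => qS q r n k + qb q (k + 1 + r) * qS q r n (k + 1)

/-- Generalized falling factorial ⟨x⟩_{r,k} = ∏_{j=0}^{k-1} (x - [r+j]). -/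
def qfall (q : ℚ) (r : ℕ) (x : ℚ) (k : ℕ) : ℚ := ∏ j ∈ Finset.range k, (x - qb q (r + j))

/-- Generalized q-exponential polynomial φ_n(x,r). -/
def qphi (q : ℚ) (r : ℕ) (n : ℕ) (x : ℚ) : ℚ :=
  ∑ k ∈ Finset.range (n + 1), qS q r n k * x ^ k

-- basic qb lemmas
lemma qb_zero (q : ℚ) : qb q 0 = 0 := by simp [qb]
lemma qb_one (q : ℚ) : qb q 1 = 1 := by simp [qb]
lemma qb_succ (q : ℚ) (m : ℕ) : qb q (m + 1) = qb q m + q ^ m := Finset.sum_range_succ _ _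
lemma qb_succ' (q : ℚ) (m : ℕ) : qb q (m + 1) = 1 + q * qb q m := by
  rw [qb, Finset.sum_range_succ']
  simp [qb, Finset.mul_sum, pow_succ, mul_comm]
  ring
lemma qb_add (q : ℚ) (a b : ℕ) : qb q (a + b) = qb q a + q ^ a * qb q b := by
  rw [qb, Finset.sum_range_add]
  simp [qb, pow_add, Finset.mul_sum]

-- qbinom lemmas
@[simp] lemma qbinom_zero_right (q : ℚ) (m : ℕ) : qbinom q m 0 = 1 := by cases m <;> rfl
lemma qbinom_succ_succ (q : ℚ) (m k : ℕ) :
    qbinom q (m + 1) (k + 1) = qbinom q m k + q ^ (k + 1) * qbinom q m (k + 1) := rfl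
lemma qbinom_eq_zero (q : ℚ) : ∀ m k, m < k → qbinom q m k = 0 := by
  intro m
  induction m with
  | zero => intro k hk; match k, hk with | k + 1, _ => rfl
  | succ m ih =>
    intro k hk
    match k, hk with
    | k + 1, hk =>
      rw [qbinom_succ_succ, ih k (by omega), ih (k + 1) (by omega)]
      ring

lemma qbinom_self (q : ℚ) : ∀ m, qbinom q m m = 1 := by
  intro m
  induction m with
  | zero => rfl
  | succ m ih => rw [qbinom_succ_succ, ih, qbinom_eq_zero q m (m+1) (by omega)]; ring

lemma qbinom_one (q : ℚ) : ∀ m, qbinom q m 1 = qb q m := by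
  intro m
  induction m with
  | zero => simp [qbinom, qb_zero]
  | succ m ih => rw [qbinom_succ_succ, ih, qbinom_zero_right, qb_succ']; ring

/-- Key absorption identity: [j]·C(j+k,k) = [k+1]·C(j+k,k+1). -/
lemma qb_mul_qbinom (q : ℚ) : ∀ m j k, j + k = m →
    qb q j * qbinom q (j + k) k = qb q (k + 1) * qbinom q (j + k) (k + 1) := by
  intro m
  induction m with
  | zero =>
    intro j k h
    obtain ⟨rfl, rfl⟩ : j = 0 ∧ k = 0 := by omega
    simp [qb_zero, qbinom_eq_zero q 0 1 (by omega)]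
  | succ m ih =>
    intro j k h
    match j, k with
    | 0, k => simp [qb_zero, qbinom_eq_zero q k (k+1) (by omega)]
    | j + 1, 0 => simp [qbinom_one, qb_one]
    | j + 1, k + 1 =>
      have e1 : j + 1 + (k + 1) = (j + 1 + k) + 1 := by omega
      rw [e1, qbinom_succ_succ, qbinom_succ_succ]
      have ih1 := ih (j + 1) k (by omega)
      have ih2 : qb q j * qbinom q (j + 1 + k) (k + 1)
          = qb q (k + 2) * qbinom q (j + 1 + k) (k + 2) := by
        have := ih j (k + 1) (by omega)
        have e2 : j + (k + 1) = j + 1 + k := by omega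
        rwa [e2] at this
      have hb1 : qb q (j + 1) = 1 + q * qb q j := qb_succ' q j
      have hb2 : qb q (k + 2) = qb q (k + 1) + q ^ (k + 1) := qb_succ q (k + 1)
      linear_combination ih1 + q ^ (k + 1) * q * ih2
        + q ^ (k + 1) * qbinom q (j + 1 + k) (k + 1) * hb1
        - qbinom q (j + 1 + k) (k + 1) * hb2

-- qS lemmas
lemma qS_zero_succ (q : ℚ) (r k : ℕ) : qS q r 0 (k + 1) = 0 := rfl
lemma qS_succ_zero (q : ℚ) (r n : ℕ) : qS q r (n + 1) 0 = qb q r * qS q r n 0 := rfl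
lemma qS_succ_succ (q : ℚ) (r n k : ℕ) :
    qS q r (n + 1) (k + 1) = qS q r n k + qb q (k + 1 + r) * qS q r n (k + 1) := rfl
lemma qS_eq_zero (q : ℚ) (r : ℕ) : ∀ n k, n < k → qS q r n k = 0 := by
  intro n
  induction n with
  | zero => intro k hk; match k, hk with | k + 1, _ => rfl
  | succ n ih =>
    intro k hk
    match k, hk with
    | k + 1, hk =>
      rw [qS_succ_succ, ih k (by omega), ih (k + 1) (by omega)]; ring
lemma qS_self (q : ℚ) (r : ℕ) : ∀ n, qS q r n n = 1 := by
  intro n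
  induction n with
  | zero => rfl
  | succ n ih => rw [qS_succ_succ, ih, qS_eq_zero q r n (n + 1) (by omega)]; ring

/-- Connection coefficients: a(n,k) = ∑_j S(n,j+k) C(j+k,k) x^j. -/
def cf (q : ℚ) (r : ℕ) (x : ℚ) (n k : ℕ) : ℚ :=
  ∑ j ∈ Finset.range (n + 1), qS q r n (j + k) * qbinom q (j + k) k * x ^ j

lemma cf_zero_right (q : ℚ) (r : ℕ) (x : ℚ) (n : ℕ) : cf q r x n 0 = qphi q r n x := by
  unfold cf qphi
  refine Finset.sum_congr rfl fun j _ => ?_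
  simp

lemma cf_eq_zero (q : ℚ) (r : ℕ) (x : ℚ) {n k : ℕ} (h : n < k) : cf q r x n k = 0 := by
  unfold cf
  refine Finset.sum_eq_zero fun j _ => ?_
  rw [qS_eq_zero q r n (j + k) (by omega)]; ring

lemma cf_self (q : ℚ) (r : ℕ) (x : ℚ) (n : ℕ) : cf q r x n n = 1 := by
  unfold cf
  rw [Finset.sum_range_succ']
  have h0 : ∀ j ∈ Finset.range n, qS q r n (j + 1 + n) * qbinom q (j + 1 + n) n * x ^ (j + 1) = 0 := by
    intro j _
    rw [qS_eq_zero q r n (j + 1 + n) (by omega)]; ring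
  rw [Finset.sum_eq_zero h0]
  simp [qS_self, qbinom_self]

def bb (q x : ℚ) (r k : ℕ) : ℚ := qb q (k + r) + q ^ k * x
def cpl (q x : ℚ) (r k : ℕ) : ℚ := q ^ (k + r) * x * qb q (k + 1)

lemma cf_rec_succ (q : ℚ) (r : ℕ) (x : ℚ) (n k : ℕ) :
    cf q r x (n + 1) (k + 1) = cf q r x n k + bb q x r (k + 1) * cf q r x n (k + 1)
      + cpl q x r (k + 1) * cf q r x n (k + 2) := by
  have key : ∀ j : ℕ,
      qS q r (n + 1) (j + (k + 1)) * qbinom q (j + (k + 1)) (k + 1) * x ^ j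
      = qS q r n (j + k) * qbinom q (j + k) k * x ^ j
        + q ^ (k + 1) * (qS q r n (j + k) * qbinom q (j + k) (k + 1) * x ^ j)
        + qb q (k + 1 + r) * (qS q r n (j + (k + 1)) * qbinom q (j + (k + 1)) (k + 1) * x ^ j)
        + q ^ (k + 1 + r) * qb q (k + 2) *
            (qS q r n (j + (k + 1)) * qbinom q (j + (k + 1)) (k + 2) * x ^ j) := by
    intro j
    have hS : qS q r (n + 1) (j + (k + 1))
        = qS q r n (j + k) + qb q (j + k + 1 + r) * qS q r n (j + (k + 1)) := rfl
    have hp : qbinom q (j + (k + 1)) (k + 1)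
        = qbinom q (j + k) k + q ^ (k + 1) * qbinom q (j + k) (k + 1) := rfl
    have hqb : qb q (j + k + 1 + r) = qb q (k + 1 + r) + q ^ (k + 1 + r) * qb q j := by
      have e2 : j + k + 1 + r = (k + 1 + r) + j := by omega
      rw [e2, qb_add]
    have hii : qb q j * qbinom q (j + (k + 1)) (k + 1)
        = qb q (k + 1 + 1) * qbinom q (j + (k + 1)) (k + 1 + 1) := qb_mul_qbinom q _ j (k + 1) rfl
    linear_combination qbinom q (j + (k + 1)) (k + 1) * x ^ j * hS
      + qS q r n (j + k) * x ^ j * hp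
      + qS q r n (j + (k + 1)) * qbinom q (j + (k + 1)) (k + 1) * x ^ j * hqb
      + q ^ (k + 1 + r) * qS q r n (j + (k + 1)) * x ^ j * hii
  unfold cf
  rw [Finset.sum_congr rfl fun j _ => key j]
  rw [Finset.sum_add_distrib, Finset.sum_add_distrib, Finset.sum_add_distrib]
  have hA : (∑ j ∈ Finset.range (n + 1 + 1), qS q r n (j + k) * qbinom q (j + k) k * x ^ j)
      = ∑ j ∈ Finset.range (n + 1), qS q r n (j + k) * qbinom q (j + k) k * x ^ j := by
    rw [Finset.sum_range_succ, qS_eq_zero q r n (n + 1 + k) (by omega)]; ring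
  have hB : (∑ j ∈ Finset.range (n + 1 + 1),
        q ^ (k + 1) * (qS q r n (j + k) * qbinom q (j + k) (k + 1) * x ^ j))
      = q ^ (k + 1) * x *
        ∑ j ∈ Finset.range (n + 1), qS q r n (j + (k + 1)) * qbinom q (j + (k + 1)) (k + 1) * x ^ j := by
    rw [Finset.sum_range_succ', Finset.mul_sum]
    have h0 : q ^ (k + 1) * (qS q r n (0 + k) * qbinom q (0 + k) (k + 1) * x ^ 0) = 0 := by
      rw [qbinom_eq_zero q (0 + k) (k + 1) (by omega)]; ring
    rw [h0, add_zero]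
    refine Finset.sum_congr rfl fun j _ => ?_
    have e : j + 1 + k = j + (k + 1) := by omega
    rw [e]; ring
  have hC : (∑ j ∈ Finset.range (n + 1 + 1),
        qb q (k + 1 + r) * (qS q r n (j + (k + 1)) * qbinom q (j + (k + 1)) (k + 1) * x ^ j))
      = qb q (k + 1 + r) *
        ∑ j ∈ Finset.range (n + 1), qS q r n (j + (k + 1)) * qbinom q (j + (k + 1)) (k + 1) * x ^ j := by
    rw [Finset.sum_range_succ, qS_eq_zero q r n (n + 1 + (k + 1)) (by omega), Finset.mul_sum]
    have h0 : qb q (k + 1 + r) * ((0:ℚ) * qbinom q (n + 1 + (k + 1)) (k + 1) * x ^ (n + 1)) = 0 := by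
      ring
    rw [h0, add_zero]
  have hD : (∑ j ∈ Finset.range (n + 1 + 1), q ^ (k + 1 + r) * qb q (k + 2) *
        (qS q r n (j + (k + 1)) * qbinom q (j + (k + 1)) (k + 2) * x ^ j))
      = q ^ (k + 1 + r) * qb q (k + 2) * x *
        ∑ j ∈ Finset.range (n + 1), qS q r n (j + (k + 2)) * qbinom q (j + (k + 2)) (k + 2) * x ^ j := by
    rw [Finset.sum_range_succ', Finset.mul_sum]
    have h0 : q ^ (k + 1 + r) * qb q (k + 2) *
        (qS q r n (0 + (k + 1)) * qbinom q (0 + (k + 1)) (k + 2) * x ^ 0) = 0 := by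
      rw [qbinom_eq_zero q (0 + (k + 1)) (k + 2) (by omega)]; ring
    rw [h0, add_zero]
    refine Finset.sum_congr rfl fun j _ => ?_
    have e : j + 1 + (k + 1) = j + (k + 2) := by omega
    rw [e]; ring
  rw [hA, hB, hC, hD]
  unfold bb cpl
  ring

lemma cf_rec_zero (q : ℚ) (r : ℕ) (x : ℚ) (n : ℕ) :
    cf q r x (n + 1) 0 = bb q x r 0 * cf q r x n 0 + cpl q x r 0 * cf q r x n 1 := by
  have key : ∀ j : ℕ,
      qS q r (n + 1) (j + 1 + 0) * qbinom q (j + 1 + 0) 0 * x ^ (j + 1)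
      = x * (qS q r n (j + 0) * qbinom q (j + 0) 0 * x ^ j)
        + qb q r * (qS q r n (j + 1 + 0) * qbinom q (j + 1 + 0) 0 * x ^ (j + 1))
        + q ^ r * x * (qS q r n (j + 1) * qbinom q (j + 1) 1 * x ^ j) := by
    intro j
    have hS : qS q r (n + 1) (j + 1 + 0) = qS q r n j + qb q (j + 1 + r) * qS q r n (j + 1) := rfl
    have hqb : qb q (j + 1 + r) = qb q r + q ^ r * qb q (j + 1) := by
      have e2 : j + 1 + r = r + (j + 1) := by omega
      rw [e2, qb_add]
    have hone : qbinom q (j + 1) 1 = qb q (j + 1) := qbinom_one q (j + 1)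
    simp only [Nat.add_zero, qbinom_zero_right]
    rw [hone]
    have hS' : qS q r (n + 1) (j + 1) = qS q r n j + qb q (j + 1 + r) * qS q r n (j + 1) := hS
    linear_combination x ^ (j + 1) * hS' + qS q r n (j + 1) * x ^ (j + 1) * hqb
  unfold cf
  rw [Finset.sum_range_succ']
  rw [Finset.sum_congr rfl fun j _ => key j]
  rw [Finset.sum_add_distrib, Finset.sum_add_distrib]
  have hA : (∑ j ∈ Finset.range (n + 1), x * (qS q r n (j + 0) * qbinom q (j + 0) 0 * x ^ j))
      = x * ∑ j ∈ Finset.range (n + 1), qS q r n j * x ^ j := by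
    rw [Finset.mul_sum]
    refine Finset.sum_congr rfl fun j _ => by simp
  have hB : (∑ j ∈ Finset.range (n + 1),
        qb q r * (qS q r n (j + 1 + 0) * qbinom q (j + 1 + 0) 0 * x ^ (j + 1)))
        + qS q r (n + 1) (0 + 0) * qbinom q (0 + 0) 0 * x ^ 0
      = qb q r * ∑ j ∈ Finset.range (n + 1), qS q r n j * x ^ j := by
    have hS0 : qS q r (n + 1) (0 + 0) = qb q r * qS q r n 0 := rfl
    rw [hS0, Finset.sum_range_succ, qS_eq_zero q r n (n + 1 + 0) (by omega),
      Finset.mul_sum, Finset.sum_range_succ']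
    simp only [Nat.add_zero, qbinom_zero_right, pow_zero, mul_one, one_mul, zero_mul, mul_zero,
      add_zero]
  have hC : (∑ j ∈ Finset.range (n + 1), q ^ r * x * (qS q r n (j + 1) * qbinom q (j + 1) 1 * x ^ j))
      = q ^ r * x * ∑ j ∈ Finset.range (n + 1), qS q r n (j + 1) * qbinom q (j + 1) 1 * x ^ j := by
    rw [Finset.mul_sum]
  unfold bb cpl
  rw [qb_one]
  simp only [Nat.zero_add, Nat.add_zero, qbinom_zero_right, pow_zero, one_mul, mul_one]
    at hA hB hC ⊢
  linear_combination hA + hB + hC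

def lam (q : ℚ) (r : ℕ) (x : ℚ) (k : ℕ) : ℚ := q ^ Nat.choose k 2 * (q ^ r * x) ^ k * qfact q k

lemma lam_zero (q : ℚ) (r : ℕ) (x : ℚ) : lam q r x 0 = 1 := by simp [lam, qfact]

lemma lam_succ (q : ℚ) (r : ℕ) (x : ℚ) (k : ℕ) :
    lam q r x (k + 1) = cpl q x r k * lam q r x k := by
  unfold lam cpl qfact
  rw [Finset.prod_range_succ]
  have hch : Nat.choose (k + 1) 2 = Nat.choose k 2 + k := by
    rw [Nat.choose_succ_succ']
    simp [Nat.choose_one_right, Nat.add_comm]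
  rw [hch, pow_add, pow_add, pow_succ]
  ring

/-- The "Gram" form, symmetric in i and j. -/
lemma sum_step (q : ℚ) (r : ℕ) (x : ℚ) (i j K : ℕ) (hj : j < K) :
    (∑ k ∈ Finset.range K, cf q r x (i + 1) k * cf q r x j k * lam q r x k)
    = ∑ k ∈ Finset.range K, lam q r x k *
        (bb q x r k * cf q r x i k * cf q r x j k
          + cpl q x r k * (cf q r x i k * cf q r x j (k + 1)
              + cf q r x i (k + 1) * cf q r x j k)) := by
  obtain ⟨K, rfl⟩ : ∃ K', K = K' + 1 := ⟨K - 1, by omega⟩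
  set f : ℕ → ℚ := fun k => lam q r x k * cpl q x r k * cf q r x i k * cf q r x j (k + 1) with hf
  set g : ℕ → ℚ := fun k => lam q r x k * cpl q x r k * cf q r x i (k + 1) * cf q r x j k with hg
  set h : ℕ → ℚ := fun k => lam q r x k * bb q x r k * cf q r x i k * cf q r x j k with hh
  have lhs_eq : (∑ k ∈ Finset.range (K + 1), cf q r x (i + 1) k * cf q r x j k * lam q r x k)
      = (∑ k ∈ Finset.range K, f k) + (∑ k ∈ Finset.range (K + 1), h k)
        + (∑ k ∈ Finset.range (K + 1), g k) := by
    rw [Finset.sum_range_succ' (fun k => cf q r x (i + 1) k * cf q r x j k * lam q r x k) K]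
    rw [Finset.sum_range_succ' h K, Finset.sum_range_succ' g K]
    have e1 : ∀ k, cf q r x (i + 1) (k + 1) * cf q r x j (k + 1) * lam q r x (k + 1)
        = f k + h (k + 1) + g (k + 1) := by
      intro k
      rw [hf, hg, hh]
      simp only
      rw [cf_rec_succ, lam_succ q r x k]
      simp only [show k + 1 + 1 = k + 2 from rfl]
      ring
    rw [Finset.sum_congr rfl fun k _ => e1 k, Finset.sum_add_distrib, Finset.sum_add_distrib]
    have e0 : cf q r x (i + 1) 0 * cf q r x j 0 * lam q r x 0 = h 0 + g 0 := by
      rw [hh, hg]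
      simp only
      rw [cf_rec_zero]
      ring
    rw [e0]
    ring
  have rhs_eq : (∑ k ∈ Finset.range (K + 1), lam q r x k *
        (bb q x r k * cf q r x i k * cf q r x j k
          + cpl q x r k * (cf q r x i k * cf q r x j (k + 1)
              + cf q r x i (k + 1) * cf q r x j k)))
      = (∑ k ∈ Finset.range (K + 1), f k) + (∑ k ∈ Finset.range (K + 1), h k)
        + (∑ k ∈ Finset.range (K + 1), g k) := by
    rw [← Finset.sum_add_distrib, ← Finset.sum_add_distrib]
    refine Finset.sum_congr rfl fun k _ => ?_
    rw [hf, hg, hh]; simp only; ring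
  rw [lhs_eq, rhs_eq]
  have topf : (∑ k ∈ Finset.range (K + 1), f k) = (∑ k ∈ Finset.range K, f k) := by
    rw [Finset.sum_range_succ, hf]
    simp only
    rw [cf_eq_zero q r x (show j < K + 1 from hj)]
    ring
  rw [topf]

lemma sum_shift (q : ℚ) (r : ℕ) (x : ℚ) (i j K : ℕ) (hi : i < K) (hj : j < K) :
    (∑ k ∈ Finset.range K, cf q r x (i + 1) k * cf q r x j k * lam q r x k)
    = ∑ k ∈ Finset.range K, cf q r x i k * cf q r x (j + 1) k * lam q r x k := by
  rw [sum_step q r x i j K hj]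
  have h2 := sum_step q r x j i K hi
  have h3 : (∑ k ∈ Finset.range K, cf q r x i k * cf q r x (j + 1) k * lam q r x k)
      = ∑ k ∈ Finset.range K, cf q r x (j + 1) k * cf q r x i k * lam q r x k :=
    Finset.sum_congr rfl fun k _ => by ring
  rw [h3, h2]
  refine Finset.sum_congr rfl fun k _ => by ring

/-- Main identity: ∑_k a(i,k) a(j,k) λ_k = φ_{i+j}. -/
lemma sum_eq_qphi (q : ℚ) (r : ℕ) (x : ℚ) : ∀ i j K, i + j < K →
    (∑ k ∈ Finset.range K, cf q r x i k * cf q r x j k * lam q r x k)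
    = qphi q r (i + j) x := by
  intro i
  induction i with
  | zero =>
    intro j K hK
    have : ∀ k ∈ Finset.range K, k ≠ 0 → cf q r x 0 k * cf q r x j k * lam q r x k = 0 := by
      intro k _ hk
      rw [cf_eq_zero q r x (show 0 < k by omega)]
      ring
    rw [Finset.sum_eq_single 0 this (by intro h; exact absurd (Finset.mem_range.2 (by omega)) h)]
    rw [cf_self, cf_zero_right, lam_zero]
    simp
  | succ i ih =>
    intro j K hK
    rw [sum_shift q r x i j K (by omega) (by omega)]
    rw [ih (j + 1) K (by omega)]
    congr 1
    omega

lemma sum_ext (q : ℚ) (r : ℕ) (x : ℚ) (i j K M : ℕ) (hK : i < K) (hKM : K ≤ M) :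
    (∑ k ∈ Finset.range M, cf q r x i k * cf q r x j k * lam q r x k)
    = ∑ k ∈ Finset.range K, cf q r x i k * cf q r x j k * lam q r x k := by
  symm
  refine Finset.sum_subset (Finset.range_subset_range.2 hKM) ?_
  intro k hk hnk
  rw [cf_eq_zero q r x (show i < k by
    simp only [Finset.mem_range, not_lt] at hnk
    omega)]
  ring

lemma sum_trunc (q : ℚ) (r : ℕ) (x : ℚ) {i j n : ℕ} (hi : i < n) (hj : j < n) :
    (∑ k ∈ Finset.range n, cf q r x i k * cf q r x j k * lam q r x k)
    = qphi q r (i + j) x := by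
  rw [sum_ext q r x i j n (max n (i + j + 1)) hi (le_max_left _ _) |>.symm,
    sum_ext q r x i j (i + j + 1) (max n (i + j + 1)) (by omega) (le_max_right _ _)]
  exact sum_eq_qphi q r x i j (i + j + 1) (by omega)

lemma prod_lam (q : ℚ) (r : ℕ) (x : ℚ) (n : ℕ) :
    (∏ k ∈ Finset.range n, lam q r x k)
    = q ^ Nat.choose n 3 * (q ^ r * x) ^ Nat.choose n 2 * ∏ k ∈ Finset.range n, qfact q k := by
  induction n with
  | zero => simp
  | succ n ih =>
    rw [Finset.prod_range_succ, ih, Finset.prod_range_succ (fun k => qfact q k)]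
    have h3 : Nat.choose (n + 1) 3 = Nat.choose n 3 + Nat.choose n 2 := by
      rw [Nat.choose_succ_succ']
      exact Nat.add_comm _ _
    have h2 : Nat.choose (n + 1) 2 = Nat.choose n 2 + n := by
      rw [Nat.choose_succ_succ']
      simp [Nat.choose_one_right, Nat.add_comm]
    rw [h3, h2, pow_add, pow_add]
    unfold lam
    ring


/-- Hankel determinant det(φ_{i+j}) = q^{C(n,3)} (q^r x)^{C(n,2)} ∏_{k<n} [k]!. -/
theorem hankel_qphi (q : ℚ) (r : ℕ) (x : ℚ) (n : ℕ) :
    Matrix.det (Matrix.of fun i j : Fin n => qphi q r ((i : ℕ) + (j : ℕ)) x) =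
      q ^ Nat.choose n 3 * (q ^ r * x) ^ Nat.choose n 2 *
        ∏ k ∈ Finset.range n, qfact q k := by

  set A : Matrix (Fin n) (Fin n) ℚ := Matrix.of fun i k : Fin n => cf q r x i k with hA
  set D : Matrix (Fin n) (Fin n) ℚ := Matrix.diagonal (fun k : Fin n => lam q r x k) with hD
  have hfact : (Matrix.of fun i j : Fin n => qphi q r ((i : ℕ) + (j : ℕ)) x)
      = A * D * A.transpose := by
    ext i j
    rw [Matrix.mul_apply]
    have : ∀ k : Fin n, (A * D) i k * A.transpose k j = cf q r x i k * cf q r x j k * lam q r x k := by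
      intro k
      rw [Matrix.mul_diagonal, Matrix.transpose_apply, hA]
      simp only [Matrix.of_apply]
      ring
    rw [Finset.sum_congr rfl fun k _ => this k]
    rw [Fin.sum_univ_eq_sum_range (fun k => cf q r x i k * cf q r x j k * lam q r x k) n]
    rw [Matrix.of_apply]
    exact (sum_trunc q r x i.isLt j.isLt).symm
  rw [hfact, Matrix.det_mul, Matrix.det_mul, Matrix.det_transpose]
  have hAtri : A.BlockTriangular OrderDual.toDual := by
    intro i j hij
    rw [hA]
    simp only [Matrix.of_apply]
    exact cf_eq_zero q r x (show (i : ℕ) < (j : ℕ) from hij)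
  have hdetA : A.det = 1 := by
    rw [Matrix.det_of_lowerTriangular A hAtri]
    refine Finset.prod_eq_one fun i _ => ?_
    rw [hA]
    simp only [Matrix.of_apply]
    exact cf_self q r x i
  have hdetD : D.det = ∏ k ∈ Finset.range n, lam q r x k := by
    rw [hD, Matrix.det_diagonal, Fin.prod_univ_eq_prod_range]
  rw [hdetA, hdetD, prod_lam]
  ring
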